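/- Let q ≥ 1, α > 0, and for each r = 1, 2 let n^{(r)} = (n^{(r)}_1, ..., n^{(r)}_q) be non-negative integer count vectors with totals n^{(r)} > 0. Let n = n^{(1)} + n^{(2)} componentwise. Then the local local BDeu score of the merged counts satisfies llB(n, α) ≤ llB(n^{(1)}, α) + ML(n^{(2)}), where llB(m, α) = -log pGam(α, ∑_k m_k) + ∑_k log pGam(α/q, m_k) and ML(m) = ∑_k m_k log(m_k / ∑_l m_l). -/

import Mathlib

/-- `pGam α x = Γ(x+α)/Γ(α)`. -/
noncomputable def pGam (α : ℝ) (x : ℕ) : ℝ := Real.Gamma (x + α) / Real.Gamma α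

/-- Local local BDeu score of a count vector `m` (over `q` categories). -/
noncomputable def llB (q : ℕ) (α : ℝ) (m : ℕ → ℕ) : ℝ :=
  -Real.log (pGam α (∑ k ∈ Finset.range q, m k)) +
    ∑ k ∈ Finset.range q, Real.log (pGam (α / q) (m k))

/-- Maximized multinomial log-likelihood (with `0 · log 0 = 0`). -/
noncomputable def ML (q : ℕ) (m : ℕ → ℕ) : ℝ :=
  ∑ k ∈ Finset.range q,
    (m k : ℝ) * Real.log ((m k : ℝ) / ((∑ l ∈ Finset.range q, m l : ℕ) : ℝ))

/-!
By the chain rule `pGam α (x + y) = pGam α x * pGam (x + α) y`, applied to the total and to every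
coordinate, the claim becomes `∑ log pGam (a k) (m k) - log pGam (∑ a) (∑ m) ≤ ML q m` with
`a k = n₁ k + α / q` and `m = n₂`: the Dirichlet-multinomial probability of a sequence is at most
its maximum likelihood. For two categories the left side is `log (B(n + a, m + b) / B(a, b))`, the
`Beta(a, b)`-mean of `t ^ n * (1 - t) ^ m`, and
`t ^ n * (1 - t) ^ m ≤ n ^ n * m ^ m / (n + m) ^ (n + m)` follows from
`x ^ n ≤ n ^ n * exp (x - n)`. Induction on the number of categories does the rest.
-/

open MeasureTheory Set ProbabilityTheory Real

lemma pow_le_pow_mul_exp_sub (n : ℕ) {x : ℝ} (hx : 0 ≤ x) : x ^ n ≤ (n : ℝ) ^ n * exp (x - n) := by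
  rcases n.eq_zero_or_pos with rfl | hn
  · simpa using one_le_exp hx
  have hn : (0 : ℝ) < n := by exact_mod_cast hn
  calc x ^ n = (n : ℝ) ^ n * (x / n) ^ n := by rw [div_pow, mul_div_cancel₀ _ (by positivity)]
    _ ≤ (n : ℝ) ^ n * exp (x / n - 1) ^ n := by
        gcongr
        linarith [add_one_le_exp (x / n - 1)]
    _ = (n : ℝ) ^ n * exp (x - n) := by
        rw [← exp_nat_mul]
        congr 2
        field_simp

lemma pow_mul_one_sub_pow_le (n m : ℕ) {t : ℝ} (h0 : 0 ≤ t) (h1 : t ≤ 1) :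
    t ^ n * (1 - t) ^ m * ((n : ℝ) + m) ^ (n + m) ≤ (n : ℝ) ^ n * (m : ℝ) ^ m := by
  have hexp : t * (n + m) - n + ((1 - t) * (n + m) - m) = 0 := by ring
  calc t ^ n * (1 - t) ^ m * ((n : ℝ) + m) ^ (n + m)
      = (t * (n + m)) ^ n * ((1 - t) * (n + m)) ^ m := by rw [pow_add, mul_pow, mul_pow]; ring
    _ ≤ ((n : ℝ) ^ n * exp (t * (n + m) - n)) * ((m : ℝ) ^ m * exp ((1 - t) * (n + m) - m)) := by
        gcongr
        · exact pow_le_pow_mul_exp_sub n (by positivity)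
        · exact pow_le_pow_mul_exp_sub m (mul_nonneg (by linarith) (by positivity))
    _ = (n : ℝ) ^ n * (m : ℝ) ^ m := by
        rw [mul_mul_mul_comm, ← exp_add, hexp, exp_zero, mul_one]

lemma ofReal_rpow_mul_one_sub_rpow {a b x : ℝ} (h0 : 0 ≤ x) (h1 : x ≤ 1) :
    ((x ^ (a - 1) * (1 - x) ^ (b - 1) : ℝ) : ℂ) =
      (x : ℂ) ^ ((a : ℂ) - 1) * (1 - (x : ℂ)) ^ ((b : ℂ) - 1) := by
  rw [Complex.ofReal_mul, Complex.ofReal_cpow h0, Complex.ofReal_cpow (by linarith)]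
  push_cast
  rfl

lemma integrableOn_rpow_mul_one_sub_rpow {a b : ℝ} (ha : 0 < a) (hb : 0 < b) :
    IntegrableOn (fun x : ℝ ↦ x ^ (a - 1) * (1 - x) ^ (b - 1)) (Ioo 0 1) := by
  have h := Complex.betaIntegral_convergent (u := a) (v := b) (by simpa) (by simpa)
  rw [intervalIntegrable_iff_integrableOn_Ioc_of_le zero_le_one] at h
  have hre : IntegrableOn (fun x : ℝ ↦ ((x : ℂ) ^ ((a : ℂ) - 1) * (1 - (x : ℂ)) ^ ((b : ℂ) - 1)).re)
      (Ioo 0 1) := (h.mono_set Ioo_subset_Ioc_self).re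
  refine hre.congr_fun (fun x hx ↦ ?_) measurableSet_Ioo
  dsimp only
  rw [← ofReal_rpow_mul_one_sub_rpow hx.1.le hx.2.le, Complex.ofReal_re]

lemma beta_eq_integral {a b : ℝ} (ha : 0 < a) (hb : 0 < b) :
    beta a b = ∫ x in Ioo 0 1, x ^ (a - 1) * (1 - x) ^ (b - 1) := by
  rw [beta_eq_betaIntegralReal a b ha hb, Complex.betaIntegral,
    intervalIntegral.integral_of_le zero_le_one, integral_Ioc_eq_integral_Ioo,
    ← setIntegral_congr_fun measurableSet_Ioo fun x hx ↦
      ofReal_rpow_mul_one_sub_rpow hx.1.le hx.2.le, integral_complex_ofReal, Complex.ofReal_re]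

lemma beta_add_nat_mul_le {a b : ℝ} (ha : 0 < a) (hb : 0 < b) (n m : ℕ) :
    beta (n + a) (m + b) * ((n : ℝ) + m) ^ (n + m) ≤ (n : ℝ) ^ n * (m : ℝ) ^ m * beta a b := by
  rw [beta_eq_integral (by positivity) (by positivity), beta_eq_integral ha hb,
    ← integral_mul_const, ← integral_const_mul]
  refine setIntegral_mono_on
    ((integrableOn_rpow_mul_one_sub_rpow (by positivity) (by positivity)).mul_const _)
    ((integrableOn_rpow_mul_one_sub_rpow ha hb).const_mul _) measurableSet_Ioo fun x hx ↦ ?_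
  have hx0 := hx.1
  have hx1 : 0 < 1 - x := sub_pos.2 hx.2
  rw [show (n : ℝ) + a - 1 = n + (a - 1) by ring, show (m : ℝ) + b - 1 = m + (b - 1) by ring,
    rpow_add hx0, rpow_add hx1, rpow_natCast, rpow_natCast]
  calc x ^ n * x ^ (a - 1) * ((1 - x) ^ m * (1 - x) ^ (b - 1)) * ((n : ℝ) + m) ^ (n + m)
      = x ^ n * (1 - x) ^ m * ((n : ℝ) + m) ^ (n + m) * (x ^ (a - 1) * (1 - x) ^ (b - 1)) := by
        ring
    _ ≤ (n : ℝ) ^ n * (m : ℝ) ^ m * (x ^ (a - 1) * (1 - x) ^ (b - 1)) := by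
        exact mul_le_mul_of_nonneg_right (pow_mul_one_sub_pow_le n m hx0.le hx.2.le) (by positivity)

lemma pGam_pos {α : ℝ} (hα : 0 < α) (x : ℕ) : 0 < pGam α x :=
  div_pos (Gamma_pos_of_pos (by positivity)) (Gamma_pos_of_pos hα)

lemma pGam_add {α : ℝ} (hα : 0 < α) (x y : ℕ) :
    pGam α (x + y) = pGam α x * pGam (x + α) y := by
  have hx : Gamma (x + α) ≠ 0 := (Gamma_pos_of_pos (by positivity)).ne'
  have hα : Gamma α ≠ 0 := (Gamma_pos_of_pos hα).ne'
  unfold pGam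
  rw [show ((x + y : ℕ) : ℝ) + α = y + (x + α) by push_cast; ring]
  field_simp

lemma pGam_mul_pGam {a b : ℝ} (ha : 0 < a) (hb : 0 < b) (n m : ℕ) :
    pGam a n * pGam b m = pGam (a + b) (n + m) * (beta (n + a) (m + b) / beta a b) := by
  have := (Gamma_pos_of_pos ha).ne'
  have := (Gamma_pos_of_pos hb).ne'
  have := (Gamma_pos_of_pos (add_pos ha hb)).ne'
  have : Gamma (n + a + (m + b)) ≠ 0 := (Gamma_pos_of_pos (by positivity)).ne'
  unfold pGam beta
  rw [show ((n + m : ℕ) : ℝ) + (a + b) = n + a + (m + b) by push_cast; ring]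
  field_simp

lemma natCast_pow_self_pos (n : ℕ) : 0 < (n : ℝ) ^ n := by
  exact_mod_cast n.pow_self_pos

lemma log_pGam_add_log_pGam_le {a b : ℝ} (ha : 0 < a) (hb : 0 < b) (n m : ℕ) :
    log (pGam a n) + log (pGam b m) ≤ log (pGam (a + b) (n + m)) +
      (n * log n + m * log m - ((n + m : ℕ) : ℝ) * log ((n + m : ℕ) : ℝ)) := by
  set N : ℕ := n + m
  have hratio_pos : 0 < beta (n + a) (m + b) / beta a b :=
    div_pos (beta_pos (by positivity) (by positivity)) (beta_pos ha hb)
  have hratio : beta (n + a) (m + b) / beta a b ≤ (n : ℝ) ^ n * (m : ℝ) ^ m / (N : ℝ) ^ N := by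
    rw [div_le_div_iff₀ (beta_pos ha hb) (natCast_pow_self_pos N)]
    have := beta_add_nat_mul_le ha hb n m
    push_cast [N]
    linarith
  have hlog : log (beta (n + a) (m + b) / beta a b) ≤ n * log n + m * log m - N * log N :=
    calc _ ≤ log ((n : ℝ) ^ n * (m : ℝ) ^ m / (N : ℝ) ^ N) := log_le_log hratio_pos hratio
      _ = _ := by
        rw [log_div (mul_pos (natCast_pow_self_pos n) (natCast_pow_self_pos m)).ne'
          (natCast_pow_self_pos N).ne', log_mul (natCast_pow_self_pos n).ne'
          (natCast_pow_self_pos m).ne', log_pow, log_pow, log_pow]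
  rw [← log_mul (pGam_pos ha n).ne' (pGam_pos hb m).ne', pGam_mul_pGam ha hb,
    log_mul (pGam_pos (add_pos ha hb) _).ne' hratio_pos.ne']
  linarith

theorem sum_log_pGam_le {ι : Type*} {s : Finset ι} (hs : s.Nonempty) {a : ι → ℝ}
    (ha : ∀ k ∈ s, 0 < a k) (m : ι → ℕ) :
    ∑ k ∈ s, log (pGam (a k) (m k)) ≤ log (pGam (∑ k ∈ s, a k) (∑ k ∈ s, m k)) +
      (∑ k ∈ s, (m k : ℝ) * log (m k) -
        ((∑ k ∈ s, m k : ℕ) : ℝ) * log ((∑ k ∈ s, m k : ℕ) : ℝ)) := by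
  induction hs using Finset.Nonempty.cons_induction with
  | singleton j => simp
  | cons j s hj hs ih =>
    have ha' : ∀ k ∈ s, 0 < a k := fun k hk ↦ ha k (Finset.mem_cons_of_mem hk)
    have hsplit := log_pGam_add_log_pGam_le (ha j (Finset.mem_cons_self j s))
      (Finset.sum_pos ha' hs) (m j) (∑ k ∈ s, m k)
    simp only [Finset.sum_cons]
    linarith [ih ha']

lemma ML_eq_sum_mul_log_sub (q : ℕ) (m : ℕ → ℕ) :
    ML q m = ∑ k ∈ Finset.range q, (m k : ℝ) * log (m k) -
      ((∑ k ∈ Finset.range q, m k : ℕ) : ℝ) * log ((∑ k ∈ Finset.range q, m k : ℕ) : ℝ) := by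
  set M : ℕ := ∑ k ∈ Finset.range q, m k
  have hM : (M : ℝ) = ∑ k ∈ Finset.range q, (m k : ℝ) := by push_cast [M]; rfl
  rw [ML, hM, Finset.sum_mul, ← hM, ← Finset.sum_sub_distrib]
  refine Finset.sum_congr rfl fun k hk ↦ ?_
  rcases (m k).eq_zero_or_pos with h | h
  · simp [h]
  have hMpos : 0 < M := h.trans_le (Finset.single_le_sum (fun _ _ ↦ Nat.zero_le _) hk)
  rw [log_div (by positivity) (by positivity), mul_sub]

lemma log_pGam_add {α : ℝ} (hα : 0 < α) (x y : ℕ) :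
    log (pGam α (x + y)) = log (pGam α x) + log (pGam (x + α) y) := by
  rw [pGam_add hα, log_mul (pGam_pos hα x).ne' (pGam_pos (by positivity) y).ne']

lemma llB_add_eq {q : ℕ} (hq : 0 < q) {α : ℝ} (hα : 0 < α) (n₁ n₂ : ℕ → ℕ) :
    llB q α (fun k ↦ n₁ k + n₂ k) = llB q α n₁ +
      (∑ k ∈ Finset.range q, log (pGam (n₁ k + α / q) (n₂ k)) -
        log (pGam ((∑ k ∈ Finset.range q, n₁ k : ℕ) + α) (∑ k ∈ Finset.range q, n₂ k))) := by
  have hβ : 0 < α / q := by positivity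
  simp only [llB, Finset.sum_add_distrib, log_pGam_add hα, log_pGam_add hβ]
  ring

theorem stmt_12_general (q : ℕ) (hq : 1 ≤ q) (α : ℝ) (hα : 0 < α) (n₁ n₂ : ℕ → ℕ) :
    llB q α (fun k => n₁ k + n₂ k) ≤ llB q α n₁ + ML q n₂ := by
  have hsum : ∑ k ∈ Finset.range q, ((n₁ k : ℝ) + α / q) =
      ((∑ k ∈ Finset.range q, n₁ k : ℕ) : ℝ) + α := by
    rw [Finset.sum_add_distrib, Finset.sum_const, Finset.card_range, nsmul_eq_mul]
    push_cast
    field_simp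
  have hbound := sum_log_pGam_le (Finset.nonempty_range_iff.2 (by omega))
    (fun k _ ↦ by positivity : ∀ k ∈ Finset.range q, 0 < (n₁ k : ℝ) + α / q) n₂
  rw [hsum] at hbound
  rw [llB_add_eq hq hα, ML_eq_sum_mul_log_sub]
  linarith

theorem stmt_12 (q : ℕ) (hq : 1 ≤ q) (α : ℝ) (hα : 0 < α) (n₁ n₂ : ℕ → ℕ)
    (h1 : 0 < ∑ k ∈ Finset.range q, n₁ k) (h2 : 0 < ∑ k ∈ Finset.range q, n₂ k) :
    llB q α (fun k => n₁ k + n₂ k) ≤ llB q α n₁ + ML q n₂ :=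
  stmt_12_general q hq α hα n₁ n₂
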